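/- arXiv:2308.00581 — 5 statements merged into one kernel-verified Lean document; each statement's English description precedes it below -/
import Mathlib

section
/- For any graph G of order n and any integer k ≥ 0, the K_{1,k+1}-isolation number ι_k(G) is at most n/(k+2). -/
open SimpleGraph

/-- The closed neighborhood `N[D]` of a set `D` of vertices. -/
def SimpleGraph.closedNbhd {V : Type*} (G : SimpleGraph V) (D : Set V) : Set V :=
  D ∪ {v | ∃ d ∈ D, G.Adj d v}

/-- `D` is a `K_{1,k+1}`-isolating set of `G`: every vertex outside `N[D]` has at most `k`
neighbors outside `N[D]`, i.e. `Δ(G − N[D]) ≤ k`. -/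
def SimpleGraph.IsIsolatingSet {V : Type*} (G : SimpleGraph V) (k : ℕ) (D : Set V) : Prop :=
  ∀ v ∉ G.closedNbhd D, ({w | w ∉ G.closedNbhd D ∧ G.Adj v w}).ncard ≤ k

/-- The `k`-isolation number `ι_k(G)`: the least size of a `K_{1,k+1}`-isolating set. -/
noncomputable def SimpleGraph.isolNum {V : Type*} (G : SimpleGraph V) (k : ℕ) : ℕ :=
  sInf {n | ∃ D : Set V, G.IsIsolatingSet k D ∧ D.ncard = n}

lemma closedNbhd_mono {V : Type*} (G : SimpleGraph V) {D D' : Set V} (h : D' ⊆ D) :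
    G.closedNbhd D' ⊆ G.closedNbhd D := by
  intro w hw
  rcases hw with hw | ⟨d, hd, ha⟩
  · exact Or.inl (h hw)
  · exact Or.inr ⟨d, h hd, ha⟩

lemma aux {V : Type*} [Fintype V] (G : SimpleGraph V) (k : ℕ) :
    ∀ n (S : Set V), S.ncard ≤ n → ∃ D : Set V, D ⊆ S ∧
      (∀ v ∈ S, v ∉ G.closedNbhd D →
        ({w | w ∈ S ∧ w ∉ G.closedNbhd D ∧ G.Adj v w}).ncard ≤ k) ∧
      (k + 2) * D.ncard ≤ S.ncard := by
  intro n
  induction n with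
  | zero =>
      intro S hS
      have : S = ∅ := Set.ncard_eq_zero (S.toFinite) |>.mp (Nat.le_zero.mp hS)
      subst this
      exact ⟨∅, Set.Subset.rfl, fun v hv => absurd hv (Set.notMem_empty v), by simp⟩
  | succ n ih =>
      intro S hS
      by_cases h : ∀ v ∈ S, ({w | w ∈ S ∧ G.Adj v w}).ncard ≤ k
      · refine ⟨∅, Set.empty_subset _, ?_, by simp⟩
        intro v hv _
        refine le_trans (Set.ncard_le_ncard ?_ (Set.toFinite _)) (h v hv)
        intro w hw; exact ⟨hw.1, hw.2.2⟩
      · push_neg at h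
        obtain ⟨v, hvS, hdeg⟩ := h
        set T : Set V := {w | w ∈ S ∧ G.Adj v w} with hT
        set Nv : Set V := insert v T with hNv
        have hvT : v ∉ T := fun hc => G.loopless.irrefl v hc.2
        have hNvcard : Nv.ncard = T.ncard + 1 := Set.ncard_insert_of_notMem hvT T.toFinite
        have hNvS : Nv ⊆ S := by
          intro w hw; rcases hw with rfl | hw; · exact hvS
          · exact hw.1
        have hNvk : k + 2 ≤ Nv.ncard := by omega
        have hdiff : (S \ Nv).ncard = S.ncard - Nv.ncard := Set.ncard_diff hNvS Nv.toFinite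
        have hNvle : Nv.ncard ≤ S.ncard := Set.ncard_le_ncard hNvS S.toFinite
        obtain ⟨D', hD'sub, hD'iso, hD'card⟩ := ih (S \ Nv) (by omega)
        have hvD' : v ∉ D' := fun hc => (hD'sub hc).2 (Set.mem_insert v T)
        refine ⟨insert v D', ?_, ?_, ?_⟩
        · intro w hw; rcases hw with rfl | hw; · exact hvS
          · exact (hD'sub hw).1
        · intro u huS hu
          have hunbr : u ∉ G.closedNbhd D' :=
            fun hc => hu (closedNbhd_mono G (Set.subset_insert v D') hc)
          have huNv : u ∉ Nv := by
            rintro (rfl | huT)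
            · exact hu (Or.inl (Set.mem_insert u D'))
            · exact hu (Or.inr ⟨v, Set.mem_insert v D', huT.2⟩)
          refine le_trans (Set.ncard_le_ncard ?_ (Set.toFinite _))
            (hD'iso u ⟨huS, huNv⟩ hunbr)
          rintro w ⟨hwS, hwN, hwa⟩
          have hwNv : w ∉ Nv := by
            rintro (rfl | hwT)
            · exact hwN (Or.inl (Set.mem_insert w D'))
            · exact hwN (Or.inr ⟨v, Set.mem_insert v D', hwT.2⟩)
          refine ⟨⟨hwS, hwNv⟩, fun hc => hwN (closedNbhd_mono G (Set.subset_insert v D') hc), hwa⟩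
        · have : (insert v D').ncard = D'.ncard + 1 :=
            Set.ncard_insert_of_notMem hvD' D'.toFinite
          rw [this, hdiff] at *
          have hm : (k + 2) * (D'.ncard + 1) = (k + 2) * D'.ncard + (k + 2) := by ring
          omega

/-- Caro–Hansberg: for any graph of order n, ι_k(G) ≤ n/(k+2). -/
theorem isolNum_le_card_div (V : Type*) [Fintype V] (G : SimpleGraph V) (k : ℕ) :
    (G.isolNum k : ℝ) ≤ (Fintype.card V : ℝ) / (k + 2) := by
  obtain ⟨D, -, hiso, hcard⟩ := aux G k (Set.univ : Set V).ncard Set.univ le_rfl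
  have hiso' : G.IsIsolatingSet k D := by
    intro v hv
    have := hiso v (Set.mem_univ v) hv
    refine le_trans (le_of_eq ?_) this
    congr 1
    ext w; simp
  have h1 : G.isolNum k ≤ D.ncard := Nat.sInf_le ⟨D, hiso', rfl⟩
  have h2 : (k + 2) * D.ncard ≤ Fintype.card V := by rw [Set.ncard_univ, Nat.card_eq_fintype_card] at hcard; exact hcard
  rw [le_div_iff₀ (by positivity)]
  calc (G.isolNum k : ℝ) * (k + 2) ≤ (D.ncard : ℝ) * (k + 2) := by
        have : (G.isolNum k : ℝ) ≤ (D.ncard : ℝ) := by exact_mod_cast h1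
        nlinarith
    _ ≤ (Fintype.card V : ℝ) := by
        have h3 : (((k + 2) * D.ncard : ℕ) : ℝ) ≤ ((Fintype.card V : ℕ) : ℝ) :=
          Nat.cast_le.mpr h2
        push_cast at h3
        linarith
end

section
/- Let G = (V,E) be a graph and S ⊆ V. If the induced subgraph G[S] has a 1-isolating set D such that there are no edges between S \ N[D] and V \ S, then ι₁(G) ≤ |D| + ι₁(G − S). -/
/-
Take a minimum 1-isolating set `D'` of `G − S` and put `T = D ∪ D'`. A vertex `v` outside
`N[T]` has all of its neighbours outside `N[T]` on its own side of the cut: for `v ∈ S` this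
is the hypothesis on `S \ N[D]`, and for `v ∉ S` it is the same hypothesis read from the
neighbour's side. So the degree of `v` in `G − N[T]` is at most its degree in `G[S] − N[D]`
or in `(G − S) − N[D']`, hence at most 1, and `ι₁(G) ≤ |T| ≤ |D| + ι₁(G − S)`.
-/

open SimpleGraph

namespace SimpleGraph

variable {V : Type*} (G : SimpleGraph V)

lemma closedNbhd_mono {A B : Set V} (h : A ⊆ B) : G.closedNbhd A ⊆ G.closedNbhd B := by
  rintro v (hv | ⟨d, hd, hadj⟩)
  · exact Or.inl (h hv)
  · exact Or.inr ⟨d, h hd, hadj⟩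

lemma val_mem_closedNbhd_of_mem_induce {S : Set V} {A : Set S} {T : Set V}
    (hAT : Subtype.val '' A ⊆ T) {w : S} (hw : w ∈ (G.induce S).closedNbhd A) :
    (w : V) ∈ G.closedNbhd T := by
  refine G.closedNbhd_mono hAT ?_
  rcases hw with hw | ⟨d, hd, hadj⟩
  · exact Or.inl ⟨w, hw, rfl⟩
  · exact Or.inr ⟨d, ⟨d, hd, rfl⟩, hadj⟩

lemma isIsolatingSet_univ (k : ℕ) : G.IsIsolatingSet k Set.univ :=
  fun _ hv => absurd (Or.inl (Set.mem_univ _)) hv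

lemma exists_isIsolatingSet_ncard_eq_isolNum (k : ℕ) :
    ∃ D : Set V, G.IsIsolatingSet k D ∧ D.ncard = G.isolNum k :=
  Nat.sInf_mem (s := {n | ∃ D : Set V, G.IsIsolatingSet k D ∧ D.ncard = n})
    ⟨_, Set.univ, G.isIsolatingSet_univ k, rfl⟩

lemma isolNum_le_ncard {k : ℕ} {D : Set V} (hD : G.IsIsolatingSet k D) :
    G.isolNum k ≤ D.ncard :=
  Nat.sInf_le ⟨D, hD, rfl⟩

lemma IsIsolatingSet.ncard_le_of_induce [Finite V] {k : ℕ} {S : Set V} {A : Set S}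
    (hA : (G.induce S).IsIsolatingSet k A) {T : Set V} (hAT : Subtype.val '' A ⊆ T) {v : S}
    (hv : (v : V) ∉ G.closedNbhd T)
    (hvS : ∀ w, w ∉ G.closedNbhd T → G.Adj v w → w ∈ S) :
    {w | w ∉ G.closedNbhd T ∧ G.Adj v w}.ncard ≤ k := by
  have hsub : {w | w ∉ G.closedNbhd T ∧ G.Adj v w} ⊆
      Subtype.val '' {w : S | w ∉ (G.induce S).closedNbhd A ∧ (G.induce S).Adj v w} := by
    rintro w ⟨hwT, hadj⟩
    exact ⟨⟨w, hvS w hwT hadj⟩,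
      ⟨mt (G.val_mem_closedNbhd_of_mem_induce hAT) hwT, hadj⟩, rfl⟩
  calc {w | w ∉ G.closedNbhd T ∧ G.Adj v w}.ncard
      ≤ (Subtype.val '' {w : S | w ∉ (G.induce S).closedNbhd A ∧
          (G.induce S).Adj v w}).ncard := Set.ncard_le_ncard hsub (Set.toFinite _)
    _ = {w : S | w ∉ (G.induce S).closedNbhd A ∧ (G.induce S).Adj v w}.ncard :=
        Set.ncard_image_of_injective _ Subtype.val_injective
    _ ≤ k := hA v (mt (G.val_mem_closedNbhd_of_mem_induce hAT) hv)

lemma isIsolatingSet_union_of_induce [Finite V] {k : ℕ} {S : Set V} {D : Set S}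
    {D' : Set ↥Sᶜ} (hD : (G.induce S).IsIsolatingSet k D)
    (hD' : (G.induce Sᶜ).IsIsolatingSet k D')
    (hcut : ∀ v : S, v ∉ (G.induce S).closedNbhd D → ∀ w ∉ S, ¬ G.Adj (v : V) w) :
    G.IsIsolatingSet k (Subtype.val '' D ∪ Subtype.val '' D') := by
  have hDT : Subtype.val '' D ⊆ Subtype.val '' D ∪ Subtype.val '' D' := Set.subset_union_left
  intro v hv
  by_cases hvS : v ∈ S
  · refine hD.ncard_le_of_induce G hDT (v := ⟨v, hvS⟩) hv fun w _ hadj => ?_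
    by_contra hwS
    exact hcut ⟨v, hvS⟩ (mt (G.val_mem_closedNbhd_of_mem_induce hDT) hv) w hwS hadj
  · refine hD'.ncard_le_of_induce G Set.subset_union_right (v := ⟨v, hvS⟩) hv
      fun w hwT hadj hwS => ?_
    exact hcut ⟨w, hwS⟩ (mt (G.val_mem_closedNbhd_of_mem_induce hDT) hwT) v hvS hadj.symm

end SimpleGraph

lemma Set.ncard_image_val_union_le {V : Type*} {S S' : Set V} (D : Set S) (D' : Set S') :
    (Subtype.val '' D ∪ Subtype.val '' D').ncard ≤ D.ncard + D'.ncard := by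
  calc (Subtype.val '' D ∪ Subtype.val '' D').ncard
      ≤ (Subtype.val '' D).ncard + (Subtype.val '' D').ncard := Set.ncard_union_le _ _
    _ = D.ncard + D'.ncard := by
      rw [Set.ncard_image_of_injective _ Subtype.val_injective,
        Set.ncard_image_of_injective _ Subtype.val_injective]

/-- If the induced subgraph on S has a 1-isolating set D with no edges between
S \ N[D] and V \ S, then ι₁(G) ≤ |D| + ι₁(G − S). -/
theorem isolNum_le_of_isolating_in_induced (V : Type*) [Fintype V] (G : SimpleGraph V)
    (S : Set V) (D : Set S) (hD : (G.induce S).IsIsolatingSet 1 D)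
    (hcut : ∀ v : S, v ∉ (G.induce S).closedNbhd D → ∀ w ∉ S, ¬ G.Adj (v : V) w) :
    G.isolNum 1 ≤ D.ncard + (G.induce Sᶜ).isolNum 1 := by
  obtain ⟨D', hD', hD'card⟩ := (G.induce Sᶜ).exists_isIsolatingSet_ncard_eq_isolNum 1
  calc G.isolNum 1 ≤ (Subtype.val '' D ∪ Subtype.val '' D').ncard :=
        G.isolNum_le_ncard (G.isIsolatingSet_union_of_induce hD hD' hcut)
    _ ≤ D.ncard + D'.ncard := Set.ncard_image_val_union_le D D'
    _ = D.ncard + (G.induce Sᶜ).isolNum 1 := by rw [hD'card]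
end

section
/- Let H be one of P₃, C₃, C₇, C₁₁ and let G be obtained from H by adding a new vertex v joined by an edge to one vertex of H (so G has order |V(H)| + 1). Then ι₁(G) = (|V(H)| + 1)/4; that is, ι₁(G) equals 1, 1, 2, 3 when H is P₃, C₃, C₇, C₁₁ respectively. -/
set_option maxRecDepth 10000

open SimpleGraph

/-- The graph obtained from H by adding a new pendant vertex joined to h₀. -/
def SimpleGraph.addPendant {W : Type*} (H : SimpleGraph W) (h₀ : W) :
    SimpleGraph (Option W) :=
  SimpleGraph.fromRel (fun a b =>
    (∃ x y, a = some x ∧ b = some y ∧ H.Adj x y) ∨ (a = none ∧ b = some h₀))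

open SimpleGraph Finset

variable {V : Type*} [Fintype V] [DecidableEq V] (G : SimpleGraph V) [DecidableRel G.Adj]

def closedF (D : Finset V) : Finset V :=
  D ∪ D.biUnion (fun d => Finset.univ.filter (fun v => G.Adj d v))

lemma coe_closedF (D : Finset V) : (closedF G D : Set V) = G.closedNbhd ↑D := by
  ext v
  simp [closedF, SimpleGraph.closedNbhd]

def checkIso (D : Finset V) : Prop :=
  ∀ v ∈ Finset.univ \ closedF G D,
    (Finset.univ.filter (fun w => w ∉ closedF G D ∧ G.Adj v w)).card ≤ 1

instance (D : Finset V) : Decidable (checkIso G D) := by unfold checkIso; infer_instance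

lemma checkIso_iff (D : Finset V) : checkIso G D ↔ G.IsIsolatingSet 1 ↑D := by
  unfold checkIso SimpleGraph.IsIsolatingSet
  have hmem : ∀ v : V, v ∉ G.closedNbhd ↑D ↔ v ∈ Finset.univ \ closedF G D := by
    intro v
    rw [← coe_closedF]
    simp
  constructor
  · intro h v hv
    have : {w | w ∉ G.closedNbhd ↑D ∧ G.Adj v w}
        = ↑(Finset.univ.filter (fun w => w ∉ closedF G D ∧ G.Adj v w)) := by
      ext w; simp [← coe_closedF]
    rw [this, Set.ncard_coe_finset]
    exact h v ((hmem v).1 hv)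
  · intro h v hv
    have h2 := h v ((hmem v).2 hv)
    have : {w | w ∉ G.closedNbhd ↑D ∧ G.Adj v w}
        = ↑(Finset.univ.filter (fun w => w ∉ closedF G D ∧ G.Adj v w)) := by
      ext w; simp [← coe_closedF]
    rwa [this, Set.ncard_coe_finset] at h2

lemma isolNum_eq_of (n : ℕ)
    (hex : ∃ D : Finset V, checkIso G D ∧ D.card = n)
    (hmin : ∀ D : Finset V, checkIso G D → n ≤ D.card) :
    G.isolNum 1 = n := by
  obtain ⟨D, hD, hc⟩ := hex
  unfold SimpleGraph.isolNum
  apply le_antisymm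
  · exact Nat.sInf_le ⟨↑D, (checkIso_iff G D).1 hD, by rw [Set.ncard_coe_finset]; exact hc⟩
  · refine le_csInf ⟨n, ⟨↑D, (checkIso_iff G D).1 hD,
      by rw [Set.ncard_coe_finset]; exact hc⟩⟩ ?_
    rintro m ⟨S, hS, rfl⟩
    have hfin : S.Finite := Set.toFinite S
    rw [← hfin.coe_toFinset] at hS
    have := hmin _ ((checkIso_iff G _).2 hS)
    rwa [← Set.ncard_coe_finset, hfin.coe_toFinset] at this

instance {W : Type*} [Fintype W] [DecidableEq W] (H : SimpleGraph W) [DecidableRel H.Adj]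
    (h₀ : W) : DecidableRel (H.addPendant h₀).Adj := fun a b =>
  decidable_of_iff _ (SimpleGraph.fromRel_adj _ a b).symm

instance {n : ℕ} : DecidableRel (pathGraph n).Adj := fun u v =>
  decidable_of_iff _ (pathGraph_adj).symm

section Iso
variable {V W : Type*} {G : SimpleGraph V} {G' : SimpleGraph W}

lemma closedNbhd_map (e : G ≃g G') (D : Set V) :
    G'.closedNbhd (⇑e '' D) = ⇑e '' G.closedNbhd D := by
  ext w
  obtain ⟨v, rfl⟩ := e.surjective w
  constructor
  · rintro (⟨d, hd, he⟩ | ⟨d, ⟨d0, hd0, rfl⟩, hadj⟩)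
    · exact ⟨v, Or.inl (by rwa [e.injective he] at hd), rfl⟩
    · exact ⟨v, Or.inr ⟨d0, hd0, e.map_adj_iff.1 hadj⟩, rfl⟩
  · rintro ⟨u, (hu | ⟨d, hd, hadj⟩), he⟩
    · exact Or.inl ⟨u, hu, he⟩
    · exact Or.inr ⟨e d, ⟨d, hd, rfl⟩, by rw [← he]; exact e.map_adj_iff.2 hadj⟩

lemma isIsolating_map (e : G ≃g G') {k : ℕ} {D : Set V} (h : G.IsIsolatingSet k D) :
    G'.IsIsolatingSet k (⇑e '' D) := by
  intro w hw
  obtain ⟨v, rfl⟩ := e.surjective w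
  rw [closedNbhd_map] at hw
  have hv : v ∉ G.closedNbhd D := fun hv => hw ⟨v, hv, rfl⟩
  have hset : {u | u ∉ G'.closedNbhd (⇑e '' D) ∧ G'.Adj (e v) u}
      = ⇑e '' {u | u ∉ G.closedNbhd D ∧ G.Adj v u} := by
    ext u
    obtain ⟨u0, rfl⟩ := e.surjective u
    rw [closedNbhd_map]
    constructor
    · rintro ⟨hu1, hu2⟩
      exact ⟨u0, ⟨fun hu => hu1 ⟨u0, hu, rfl⟩, e.map_adj_iff.1 hu2⟩, rfl⟩
    · rintro ⟨u1, ⟨hu1, hu2⟩, he⟩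
      cases e.injective he
      exact ⟨fun ⟨u2, hu2', he2⟩ => hu1 (by rwa [← e.injective he2]), e.map_adj_iff.2 hu2⟩
  rw [hset, Set.ncard_image_of_injective _ e.injective]
  exact h v hv

lemma isolNum_congr (e : G ≃g G') (k : ℕ) : G.isolNum k = G'.isolNum k := by
  unfold SimpleGraph.isolNum
  congr 1
  ext n
  constructor
  · rintro ⟨D, hD, rfl⟩
    exact ⟨⇑e '' D, isIsolating_map e hD, Set.ncard_image_of_injective _ e.injective⟩
  · rintro ⟨D, hD, rfl⟩
    exact ⟨⇑e.symm '' D, isIsolating_map e.symm hD,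
      Set.ncard_image_of_injective _ e.symm.injective⟩

end Iso

section Mono
variable {V : Type*} [Fintype V] [DecidableEq V] {G : SimpleGraph V} [DecidableRel G.Adj]

lemma isIsolating_mono {k : ℕ} {D D' : Set V} (h : D ⊆ D') (hD : G.IsIsolatingSet k D) :
    G.IsIsolatingSet k D' := by
  have hsub : G.closedNbhd D ⊆ G.closedNbhd D' := by
    rintro v (hv | ⟨d, hd, hadj⟩)
    · exact Or.inl (h hv)
    · exact Or.inr ⟨d, h hd, hadj⟩
  intro v hv
  refine le_trans (Set.ncard_le_ncard ?_ (Set.toFinite _)) (hD v fun hvD => hv (hsub hvD))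
  rintro w ⟨hw1, hw2⟩
  exact ⟨fun h' => hw1 (hsub h'), hw2⟩

lemma checkIso_mono {D D' : Finset V} (h : D ⊆ D') (hD : checkIso G D) : checkIso G D' :=
  (checkIso_iff G D').2 (isIsolating_mono (Finset.coe_subset.2 h) ((checkIso_iff G D).1 hD))

lemma min_of_card {m : ℕ} (hm : m ≤ Fintype.card V)
    (hk : ∀ t : Finset V, t.card = m → ¬ checkIso G t) :
    ∀ D : Finset V, checkIso G D → m + 1 ≤ D.card := by
  intro D hD
  by_contra hc
  push_neg at hc
  obtain ⟨t, _, _, hcard⟩ := Finset.exists_subsuperset_card_eq (Finset.subset_univ D)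
    (Nat.lt_add_one_iff.1 hc) (by simpa using hm)
  exact hk t hcard (checkIso_mono (by assumption) hD)

end Mono

lemma addPendant_adj {W : Type*} (H : SimpleGraph W) (h₀ : W) (a b : Option W) :
    (H.addPendant h₀).Adj a b ↔
      (∃ x y, a = some x ∧ b = some y ∧ H.Adj x y) ∨
      (a = none ∧ b = some h₀) ∨ (b = none ∧ a = some h₀) := by
  unfold SimpleGraph.addPendant
  rw [SimpleGraph.fromRel_adj]
  cases a <;> cases b <;> simp
  constructor
  · rintro ⟨hne, (h | h)⟩
    · exact h
    · exact h.symm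
  · intro h
    exact ⟨h.ne, Or.inl h⟩

def cycleRotIso (n : ℕ) (h₀ : Fin (n + 1)) :
    (cycleGraph (n + 1)).addPendant h₀ ≃g (cycleGraph (n + 1)).addPendant 0 where
  toEquiv := (Equiv.subRight h₀).optionCongr
  map_rel_iff' := by
    intro a b
    show ((cycleGraph (n + 1)).addPendant 0).Adj (Option.map _ a) (Option.map _ b) ↔ _
    have key : ∀ u v : Fin (n + 1),
        (cycleGraph (n + 1)).Adj (u - h₀) (v - h₀) ↔ (cycleGraph (n + 1)).Adj u v := by
      intro u v
      have := circulantGraph_adj_translate (s := ({1} : Set (Fin (n+1)))) (u := u)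
        (v := v) (d := -h₀)
      rw [cycleGraph_eq_circulantGraph, sub_eq_add_neg, sub_eq_add_neg]
      exact this
    rw [addPendant_adj, addPendant_adj]
    match a, b with
    | none, none => simp
    | none, some y => simp [sub_eq_zero]
    | some x, none => simp [sub_eq_zero]
    | some x, some y => simp [key]

section Min
variable {V : Type*} [Fintype V] [DecidableEq V] {G : SimpleGraph V} [DecidableRel G.Adj]

lemma minCardOne (h : ¬ checkIso G ∅) : ∀ D : Finset V, checkIso G D → 1 ≤ D.card := by
  have := min_of_card (G := G) (m := 0) (Nat.zero_le _) (fun t ht => by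
    rw [Finset.card_eq_zero.1 ht]; exact h)
  exact this

lemma minCardTwo (hcard : 1 ≤ Fintype.card V) (h : ∀ a : V, ¬ checkIso G {a}) :
    ∀ D : Finset V, checkIso G D → 2 ≤ D.card := by
  have := min_of_card (G := G) (m := 1) hcard (fun t ht => by
    obtain ⟨a, rfl⟩ := Finset.card_eq_one.1 ht; exact h a)
  exact this

lemma minCardThree (hcard : 2 ≤ Fintype.card V) (h : ∀ a b : V, ¬ checkIso G {a, b}) :
    ∀ D : Finset V, checkIso G D → 3 ≤ D.card := by
  have := min_of_card (G := G) (m := 2) hcard (fun t ht => by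
    obtain ⟨a, b, _, rfl⟩ := Finset.card_eq_two.1 ht; exact h a b)
  exact this

end Min

lemma c3_base : ((cycleGraph 3).addPendant 0).isolNum 1 = 1 := by
  apply isolNum_eq_of
  · exact ⟨{some 0}, by decide, by decide⟩
  · exact minCardOne (by decide)

lemma c7_base : ((cycleGraph 7).addPendant 0).isolNum 1 = 2 := by
  apply isolNum_eq_of
  · exact ⟨{some 2, some 5}, by decide, by decide⟩
  · exact minCardTwo (by decide) (by decide)

set_option maxHeartbeats 4000000 in
lemma c11_base : ((cycleGraph 11).addPendant 0).isolNum 1 = 3 := by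
  apply isolNum_eq_of
  · exact ⟨{some 2, some 6, some 9}, by decide, by decide⟩
  · exact minCardThree (by decide) (by decide)

/-- Attaching a pendant vertex to P₃, C₃, C₇, C₁₁ gives graphs whose 1-isolation
numbers are 1, 1, 2, 3 respectively, i.e. (|V(H)|+1)/4. -/
theorem isolNum_one_addPendant :
    (∀ h₀ : Fin 3, ((pathGraph 3).addPendant h₀).isolNum 1 = 1) ∧
    (∀ h₀ : Fin 3, ((cycleGraph 3).addPendant h₀).isolNum 1 = 1) ∧
    (∀ h₀ : Fin 7, ((cycleGraph 7).addPendant h₀).isolNum 1 = 2) ∧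
    (∀ h₀ : Fin 11, ((cycleGraph 11).addPendant h₀).isolNum 1 = 3) := by
  refine ⟨?_, ?_, ?_, ?_⟩
  · intro h₀
    apply isolNum_eq_of
    · exact ⟨{some 1}, by fin_cases h₀ <;> decide, by decide⟩
    · exact minCardOne (by fin_cases h₀ <;> decide)
  · intro h₀
    exact (isolNum_congr (cycleRotIso 2 h₀) 1).trans c3_base
  · intro h₀
    exact (isolNum_congr (cycleRotIso 6 h₀) 1).trans c7_base
  · intro h₀
    exact (isolNum_congr (cycleRotIso 10 h₀) 1).trans c11_base
end

section
/- If D is any 1-isolating set of a graph G that contains a pendant copy of C₇ attached by an edge at a vertex v (the subgraph S consisting of v together with the 7 cycle vertices, with only v having neighbors outside S), then |D ∩ S| ≥ |S|/4 = 2. -/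
open SimpleGraph

/-- If G contains a pendant copy of C₇ attached by an edge at a vertex v (only the
attachment cycle-vertex having neighbors outside the cycle, namely v), then every
1-isolating set D of G meets S = {v} ∪ V(C₇) in at least |S|/4 = 2 vertices. -/
theorem pendant_seven_cycle_isolating_lower_bound (V : Type*) [Fintype V]
    (G : SimpleGraph V) (v : V) (c : Fin 7 → V)
    (hinj : Function.Injective c) (hv : v ∉ Set.range c)
    (hcyc : ∀ i j : Fin 7, G.Adj (c i) (c j) ↔ (i - j = 1 ∨ j - i = 1))
    (hattach : G.Adj v (c 0))
    (hpend : ∀ (i : Fin 7) (w : V), G.Adj (c i) w → w ∈ Set.range c ∪ {v})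
    (hvonly : ∀ i : Fin 7, G.Adj v (c i) → i = 0)
    (D : Set V) (hD : G.IsIsolatingSet 1 D) :
    2 ≤ (D ∩ ({v} ∪ Set.range c)).ncard := by
  classical
  set S : Set V := {v} ∪ Set.range c with hS
  by_contra hlt
  push_neg at hlt
  have hle1 : (D ∩ S).ncard ≤ 1 := by omega
  -- if a cycle vertex is in N[D], it is dominated from within D ∩ S
  have key : ∀ j : Fin 7, c j ∈ G.closedNbhd D →
      ∃ x ∈ D ∩ S, x = c j ∨ G.Adj x (c j) := by
    intro j hj
    rcases hj with hj | ⟨d, hd, hadj⟩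
    · exact ⟨c j, ⟨hj, Or.inr ⟨j, rfl⟩⟩, Or.inl rfl⟩
    · have hmem := hpend j d hadj.symm
      refine ⟨d, ⟨hd, ?_⟩, Or.inr hadj⟩
      rcases hmem with h | h
      · exact Or.inr h
      · exact Or.inl h
  -- three consecutive cycle vertices outside N[D] give a contradiction
  have contra : ∀ j : Fin 7, c (j - 1) ∉ G.closedNbhd D → c j ∉ G.closedNbhd D →
      c (j + 1) ∉ G.closedNbhd D → False := by
    intro j h1 h2 h3
    have hT := hD (c j) h2
    have hadj1 : G.Adj (c j) (c (j - 1)) := by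
      rw [hcyc]
      exact Or.inl ((by decide : ∀ k : Fin 7, k - (k - 1) = 1) j)
    have hadj2 : G.Adj (c j) (c (j + 1)) := by
      rw [hcyc]
      exact Or.inr ((by decide : ∀ k : Fin 7, k + 1 - k = 1) j)
    have hsub : ({c (j - 1), c (j + 1)} : Set V) ⊆
        {w | w ∉ G.closedNbhd D ∧ G.Adj (c j) w} := by
      intro w hw
      rcases hw with rfl | rfl
      · exact ⟨h1, hadj1⟩
      · exact ⟨h3, hadj2⟩
    have hne : c (j - 1) ≠ c (j + 1) := by
      intro h
      have h' := hinj h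
      have : ∀ k : Fin 7, k - 1 ≠ k + 1 := by decide
      exact this j h'
    have hp : ({c (j - 1), c (j + 1)} : Set V).ncard = 2 := Set.ncard_pair hne
    have := Set.ncard_le_ncard hsub (Set.toFinite _)
    omega
  rcases (Set.ncard_le_one_iff_eq (Set.toFinite _)).mp hle1 with hemp | ⟨x, hsing⟩
  · -- D ∩ S = ∅ : all cycle vertices outside N[D]
    refine contra 1 ?_ ?_ ?_ <;>
      · intro h
        obtain ⟨x, hx, -⟩ := key _ h
        rw [hemp] at hx
        exact hx
  · have hxS : x ∈ S := by
      have : x ∈ D ∩ S := by rw [hsing]; rfl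
      exact this.2
    rcases hxS with hxv | ⟨i, rfl⟩
    · -- x = v : only c 0 can be in N[D]
      have hBad : ∀ j : Fin 7, c j ∈ G.closedNbhd D → j = 0 := by
        intro j hj
        obtain ⟨y, hy, hcase⟩ := key _ hj
        rw [hsing] at hy
        rcases hy with rfl
        rcases hxv with rfl
        rcases hcase with h | h
        · exact absurd ⟨j, h.symm⟩ hv
        · exact hvonly j h
      refine contra 3 (fun h => ?_) (fun h => ?_) (fun h => ?_) <;>
        · have := hBad _ h
          exact absurd this (by decide)
    · -- x = c i : only c (i-1), c i, c (i+1) can be in N[D]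
      have hBad : ∀ j : Fin 7, c j ∈ G.closedNbhd D →
          j = i ∨ i - j = 1 ∨ j - i = 1 := by
        intro j hj
        obtain ⟨y, hy, hcase⟩ := key _ hj
        rw [hsing] at hy
        rcases hy with rfl
        rcases hcase with h | h
        · exact Or.inl (hinj h).symm
        · exact Or.inr ((hcyc i j).mp h)
      have hf1 : ∀ i : Fin 7, ¬(i + 3 - 1 = i ∨ i - (i + 3 - 1) = 1 ∨ (i + 3 - 1) - i = 1) := by
        decide
      have hf2 : ∀ i : Fin 7, ¬(i + 3 = i ∨ i - (i + 3) = 1 ∨ (i + 3) - i = 1) := by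
        decide
      have hf3 : ∀ i : Fin 7, ¬(i + 3 + 1 = i ∨ i - (i + 3 + 1) = 1 ∨ (i + 3 + 1) - i = 1) := by
        decide
      exact contra (i + 3) (fun h => hf1 i (hBad _ h)) (fun h => hf2 i (hBad _ h))
        (fun h => hf3 i (hBad _ h))
end

section
/- If G is a connected graph of order n with maximum degree Δ(G) ≤ 2 and G ∉ {P₃, C₃, C₆, C₇, C₁₁}, then ι₁(G) ≤ n/4. -/
open SimpleGraph

namespace IsolAux

variable {V : Type*}

lemma cross (G : SimpleGraph V) (A : Set V) {u w : V} (q : G.Walk u w)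
    (hu : u ∈ A) (hw : w ∉ A) : ∃ x ∈ A, ∃ y, y ∉ A ∧ G.Adj x y := by
  induction q with
  | nil => exact absurd hu hw
  | @cons a b c h p ih =>
    by_cases hb : b ∈ A
    · exact ih hb hw
    · exact ⟨a, hu, b, hb, h⟩

lemma three_le_degree [Fintype V] (G : SimpleGraph V) [DecidableRel G.Adj] {v a b c : V}
    (hab : a ≠ b) (hac : a ≠ c) (hbc : b ≠ c)
    (ha : G.Adj v a) (hb : G.Adj v b) (hc : G.Adj v c) : 3 ≤ G.degree v := by
  classical
  have hsub : ({a, b, c} : Finset V) ⊆ G.neighborFinset v := by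
    intro x hx
    simp only [Finset.mem_insert, Finset.mem_singleton] at hx
    rcases hx with rfl | rfl | rfl <;> simp [ha, hb, hc]
  have hcard : ({a, b, c} : Finset V).card = 3 := by
    rw [Finset.card_insert_of_notMem (by simp [hab, hac]),
      Finset.card_insert_of_notMem (by simp [hbc]), Finset.card_singleton]
  calc 3 = ({a, b, c} : Finset V).card := hcard.symm
    _ ≤ (G.neighborFinset v).card := Finset.card_le_card hsub
    _ = G.degree v := rfl

lemma exists_ham [Fintype V] (G : SimpleGraph V) [DecidableRel G.Adj]
    (hconn : G.Connected) (hdeg : ∀ v : V, G.degree v ≤ 2) :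
    ∃ l : List V, l.Nodup ∧ (∀ v : V, v ∈ l) ∧ l.Chain' G.Adj := by
  classical
  haveI : Nonempty V := hconn.nonempty
  set K : Set ℕ := {k | ∃ u v : V, ∃ p : G.Walk u v, p.IsPath ∧ p.length = k} with hK
  have hKne : K.Nonempty := ⟨0, Classical.arbitrary V, Classical.arbitrary V, Walk.nil,
    Walk.IsPath.nil, rfl⟩
  have hKbdd : BddAbove K := by
    refine ⟨Fintype.card V, ?_⟩
    rintro k ⟨u, v, p, hp, rfl⟩
    exact hp.length_lt.le
  obtain ⟨u, v, p, hp, hlen⟩ := Nat.sSup_mem hKne hKbdd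
  refine ⟨p.support, hp.support_nodup, ?_, p.isChain_adj_support⟩
  intro w
  by_contra hw
  -- no neighbor of an endpoint lies outside the support
  have hend : ∀ y, y ∉ p.support → ¬ G.Adj u y := by
    intro y hy hadj
    have hp' : (Walk.cons hadj.symm p).IsPath := hp.cons hy
    have : (Walk.cons hadj.symm p).length ≤ sSup K :=
      le_csSup hKbdd ⟨y, v, _, hp', rfl⟩
    simp only [Walk.length_cons, hlen] at this
    omega
  have hend' : ∀ y, y ∉ p.support → ¬ G.Adj v y := by
    intro y hy hadj
    have hy' : y ∉ p.reverse.support := by rwa [Walk.support_reverse, List.mem_reverse]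
    have hp' : (Walk.cons hadj.symm p.reverse).IsPath := hp.reverse.cons hy'
    have : (Walk.cons hadj.symm p.reverse).length ≤ sSup K :=
      le_csSup hKbdd ⟨y, u, _, hp', rfl⟩
    simp only [Walk.length_cons, Walk.length_reverse, hlen] at this
    omega
  obtain ⟨x, hx, y, hy, hadj⟩ :=
    cross G {z | z ∈ p.support} ((hconn.preconnected u w).some) p.start_mem_support hw
  -- x is an interior vertex of the path
  set l : List V := p.support with hl
  have hll : l.length = p.support.length := rfl
  obtain ⟨t, ht, hxt⟩ := List.mem_iff_getElem.1 hx
  have hxu : x ≠ u := by rintro rfl; exact hend y hy hadj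
  have hxv : x ≠ v := by rintro rfl; exact hend' y hy hadj
  have hlpos : 0 < l.length := by omega
  have hhead : l[0] = u := by
    rw [List.getElem_zero hlpos]; exact p.head_support
  have hlast : l[l.length - 1] = v := by
    rw [← List.getLast_eq_getElem]; exact p.getLast_support
  have ht0 : t ≠ 0 := by
    rintro rfl; rw [hxt] at hhead; exact hxu hhead
  have htl : t ≠ l.length - 1 := by
    rintro rfl; rw [hxt] at hlast; exact hxv hlast
  have hchain := List.isChain_iff_getElem.1 p.isChain_adj_support
  have h1 : G.Adj (l[t-1]'(by omega)) (l[t]'ht) := by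
    have := hchain (t-1) (by omega)
    convert this using 3 <;> omega
  have h2 : G.Adj (l[t]'ht) (l[t+1]'(by omega)) := by
    have := hchain t (by omega)
    simpa only [List.get_eq_getElem] using this
  have hnd : l.Nodup := hp.support_nodup
  have hne1 : l[t-1]'(by omega) ≠ l[t+1]'(by omega) := by
    intro h
    have := hnd.getElem_inj_iff.1 h
    omega
  have hney : ∀ (s : ℕ) (hs : s < l.length), l[s] ≠ y := by
    intro s hs h
    exact hy (h ▸ List.getElem_mem hs)
  have h3 : 3 ≤ G.degree x := by
    refine three_le_degree G hne1 (hney _ _) (hney _ _) ?_ ?_ ?_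
    · rw [← hxt]; exact h1.symm
    · rw [← hxt]; exact h2
    · exact hadj
  have := hdeg x
  omega

end IsolAux


namespace IsolAux2

variable {V : Type*}

lemma isolating_of_unique (G : SimpleGraph V) (D : Set V)
    (h : ∀ v ∉ G.closedNbhd D, ∃ z, ∀ w ∉ G.closedNbhd D, G.Adj v w → w = z) :
    G.IsIsolatingSet 1 D := by
  intro v hv
  obtain ⟨z, hz⟩ := h v hv
  have hsub : {w | w ∉ G.closedNbhd D ∧ G.Adj v w} ⊆ {z} := by
    rintro w ⟨h1, h2⟩
    exact hz w h1 h2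
  calc ({w | w ∉ G.closedNbhd D ∧ G.Adj v w}).ncard
      ≤ ({z} : Set V).ncard := Set.ncard_le_ncard hsub (Set.finite_singleton z)
    _ = 1 := Set.ncard_singleton z

lemma isolNum_le (G : SimpleGraph V) (D : Set V) (h : G.IsIsolatingSet 1 D) :
    G.isolNum 1 ≤ D.ncard :=
  Nat.sInf_le ⟨D, h, rfl⟩

lemma iso_of_adj_iff {n : ℕ} (G : SimpleGraph V) (H : SimpleGraph (Fin n))
    (φ : Fin n ≃ V) (h : ∀ i j : Fin n, G.Adj (φ i) (φ j) ↔ H.Adj i j) :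
    Nonempty (G ≃g H) := by
  refine ⟨⟨φ.symm, ?_⟩⟩
  intro a b
  have := h (φ.symm a) (φ.symm b)
  simpa using this.symm

lemma cardfil (c : ℕ) (hc : c < 5) : ∀ m : ℕ,
    ((Finset.range m).filter (fun j => j % 5 = c)).card = (m + 4 - c) / 5 := by
  intro m
  induction m with
  | zero => simp; omega
  | succ m ih =>
    rw [Finset.range_add_one, Finset.filter_insert]
    split_ifs with h
    · rw [Finset.card_insert_of_notMem (by simp)]
      omega
    · omega

-- helper for mod reasoning with symbolic n
lemma small_mod (x n : ℕ) (hn : 0 < n) (hx : x < 2 * n) :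
    x % n = if x < n then x else x - n := by
  split_ifs with h
  · exact Nat.mod_eq_of_lt h
  · rw [Nat.mod_eq_sub_mod (by omega)]
    exact Nat.mod_eq_of_lt (by omega)

end IsolAux2


/-- Coverage predicate: index `i` is in the closed neighborhood of `S` along the path order. -/
def covP (S : Finset ℕ) (i : ℕ) : Prop := i ∈ S ∨ i + 1 ∈ S ∨ (1 ≤ i ∧ i - 1 ∈ S)

set_option maxHeartbeats 4000000 in
/-- A connected graph of maximum degree at most 2, not in {P₃, C₃, C₆, C₇, C₁₁},
satisfies ι₁(G) ≤ n/4. -/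
theorem isolNum_one_max_degree_le_two (V : Type*) [Fintype V] (G : SimpleGraph V)
    [DecidableRel G.Adj] (hconn : G.Connected) (hdeg : ∀ v : V, G.degree v ≤ 2)
    (hP3 : ¬ Nonempty (G ≃g pathGraph 3))
    (hC3 : ¬ Nonempty (G ≃g cycleGraph 3))
    (hC6 : ¬ Nonempty (G ≃g cycleGraph 6))
    (hC7 : ¬ Nonempty (G ≃g cycleGraph 7))
    (hC11 : ¬ Nonempty (G ≃g cycleGraph 11)) :
    (G.isolNum 1 : ℝ) ≤ (Fintype.card V : ℝ) / 4 := by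
  classical
  haveI hne : Nonempty V := hconn.nonempty
  obtain ⟨v₀⟩ := hne
  obtain ⟨l, hnd, hvm, hch⟩ := IsolAux.exists_ham G hconn hdeg
  obtain ⟨n, hnl⟩ : ∃ n, l.length = n := ⟨_, rfl⟩
  obtain ⟨e, he⟩ : ∃ e : ℕ → V, ∀ i, e i = l.getD i v₀ := ⟨_, fun _ => rfl⟩
  have E1 : ∀ i j, i < n → j < n → e i = e j → i = j := by
    intro i j hi hj hij
    have hi' : i < l.length := by omega
    have hj' : j < l.length := by omega
    rw [he i, he j, List.getD_eq_getElem _ _ hi', List.getD_eq_getElem _ _ hj'] at hij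
    exact hnd.getElem_inj_iff.1 hij
  have E2 : ∀ v : V, ∃ i, i < n ∧ e i = v := by
    intro v
    obtain ⟨i, hi, hiv⟩ := List.mem_iff_getElem.1 (hvm v)
    exact ⟨i, by omega, by rw [he i, List.getD_eq_getElem _ _ hi]; exact hiv⟩
  have E3 : ∀ i, i + 1 < n → G.Adj (e i) (e (i + 1)) := by
    intro i hi
    have h1 : i + 1 < l.length := by omega
    have h2 := List.isChain_iff_getElem.1 hch i (by omega)
    rw [he i, he (i + 1), List.getD_eq_getElem _ _ (by omega : i < l.length),
      List.getD_eq_getElem _ _ h1]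
    exact h2
  have npos : 0 < n := by
    obtain ⟨i, hi, -⟩ := E2 v₀; omega
  have hcard : Fintype.card V = n := by
    have huniv : l.toFinset = Finset.univ :=
      Finset.eq_univ_iff_forall.2 (fun v => List.mem_toFinset.2 (hvm v))
    rw [← Finset.card_univ, ← huniv, List.toFinset_card_of_nodup hnd, hnl]
  have hEadj : ∀ i j, i < n → j < n → i ≠ j → (e i = e j → False) := by
    intro i j hi hj hij h
    exact hij (E1 i j hi hj h)
  have L : ∀ i j, i < n → j < n → G.Adj (e i) (e j) → i + 1 ≠ j → j + 1 ≠ i →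
      i = 0 ∨ i = n - 1 := by
    intro i j hi hj hadj h1 h2
    by_contra hcon
    push_neg at hcon
    have hi1 : i + 1 < n := by omega
    have hi0 : 1 ≤ i := by omega
    have hij : i ≠ j := fun hf => hadj.ne (by rw [hf])
    have ha := E3 (i - 1) (by omega)
    rw [show i - 1 + 1 = i by omega] at ha
    have hb := E3 i hi1
    have h3 : 3 ≤ G.degree (e i) := by
      refine IsolAux.three_le_degree G ?_ ?_ ?_ ha.symm hb hadj
      · exact fun h => hEadj _ _ (by omega) (by omega) (by omega) h
      · exact fun h => hEadj _ _ (by omega) hj (by omega) h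
      · exact fun h => hEadj _ _ hi1 hj (by omega) h
    have := hdeg (e i)
    omega
  have E4 : ∀ i j, i < n → j < n → G.Adj (e i) (e j) →
      i + 1 = j ∨ j + 1 = i ∨ (i = 0 ∧ j = n - 1) ∨ (j = 0 ∧ i = n - 1) := by
    intro i j hi hj hadj
    by_cases h1 : i + 1 = j
    · exact Or.inl h1
    by_cases h2 : j + 1 = i
    · exact Or.inr (Or.inl h2)
    have hij : i ≠ j := fun hf => hadj.ne (by rw [hf])
    have hi' := L i j hi hj hadj h1 h2
    have hj' := L j i hj hi hadj.symm h2 h1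
    omega
  have hbij : Function.Bijective (fun i : Fin n => e i.val) := by
    constructor
    · intro a b h
      exact Fin.ext (E1 a.val b.val a.isLt b.isLt h)
    · intro v
      obtain ⟨i, hi, hei⟩ := E2 v
      exact ⟨⟨i, hi⟩, hei⟩
  -- the main reduction
  have key : ∀ S : Finset ℕ,
      (∀ s ∈ S, s < n) →
      (∀ s ∈ S, (s ≠ 0 ∧ s ≠ n - 1) ∨ ¬ G.Adj (e 0) (e (n - 1))) →
      4 * S.card ≤ n →
      (∀ i, i < n → ¬ covP S i →
        ∃ z, ∀ j, j < n → ¬ covP S j → G.Adj (e i) (e j) → e j = z) →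
      (G.isolNum 1 : ℝ) ≤ (Fintype.card V : ℝ) / 4 := by
    intro S hS hE hcardS hex
    set D : Set V := e '' (↑S : Set ℕ) with hD
    have MEM : ∀ j, j < n → (e j ∈ G.closedNbhd D ↔ covP S j) := by
      intro j hj
      constructor
      · intro hmem
        simp only [SimpleGraph.closedNbhd, Set.mem_union, Set.mem_image, Set.mem_setOf_eq,
          Finset.mem_coe, hD] at hmem
        rcases hmem with ⟨s, hsS, hse⟩ | ⟨d, ⟨s, hsS, rfl⟩, hadj⟩
        · left
          have := E1 s j (hS s hsS) hj hse
          rwa [← this]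
        · have h4 := E4 s j (hS s hsS) hj hadj
          rcases h4 with h | h | ⟨h0, hj'⟩ | ⟨hj0, h0⟩
          · right; right
            exact ⟨by omega, by rw [show j - 1 = s by omega]; exact hsS⟩
          · right; left; rwa [h]
          · exfalso
            rcases hE s hsS with ⟨hs0, _⟩ | hnc
            · exact hs0 h0
            · rw [h0, hj'] at hadj
              exact hnc hadj
          · exfalso
            rcases hE s hsS with ⟨_, hs1⟩ | hnc
            · exact hs1 h0
            · rw [h0, hj0] at hadj
              exact hnc hadj.symm
      · intro hc
        simp only [SimpleGraph.closedNbhd, Set.mem_union, Set.mem_image, Set.mem_setOf_eq,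
          Finset.mem_coe, hD]
        rcases hc with hc | hc | ⟨hj1, hc⟩
        · exact Or.inl ⟨j, hc, rfl⟩
        · refine Or.inr ⟨e (j + 1), ⟨j + 1, hc, rfl⟩, ?_⟩
          exact (E3 j (hS _ hc)).symm
        · refine Or.inr ⟨e (j - 1), ⟨j - 1, hc, rfl⟩, ?_⟩
          have := E3 (j - 1) (by rw [show j - 1 + 1 = j by omega]; exact hj)
          rwa [show j - 1 + 1 = j by omega] at this
    have hisol : G.IsIsolatingSet 1 D := by
      apply IsolAux2.isolating_of_unique
      intro v hv
      obtain ⟨i, hi, hei⟩ := E2 v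
      subst hei
      obtain ⟨z, hz⟩ := hex i hi (fun hc => hv ((MEM i hi).2 hc))
      refine ⟨z, ?_⟩
      intro w hw hadj
      obtain ⟨j, hj, hej⟩ := E2 w
      subst hej
      exact hz j hj (fun hc => hw ((MEM j hj).2 hc)) hadj
    have hDcard : D.ncard = S.card := by
      rw [hD, Set.ncard_image_of_injOn, Set.ncard_coe_finset]
      intro a ha b hb hab
      exact E1 a b (hS a ha) (hS b hb) hab
    have hnum : G.isolNum 1 ≤ S.card := hDcard ▸ IsolAux2.isolNum_le G D hisol
    rw [hcard]
    have h4 : (4 : ℝ) * (S.card : ℝ) ≤ (n : ℝ) := by exact_mod_cast hcardS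
    have h5 : (G.isolNum 1 : ℝ) ≤ (S.card : ℝ) := by exact_mod_cast hnum
    linarith
  by_cases hn2 : n ≤ 2
  · -- trivial small cases
    apply key ∅ (by simp) (by simp) (by simp)
    intro i hi _
    refine ⟨e (1 - i), ?_⟩
    intro j hj _ hadj
    have hij : i ≠ j := fun hf => hadj.ne (by rw [hf])
    rw [show j = 1 - i by omega]
  push_neg at hn2
  by_cases hcyc : G.Adj (e 0) (e (n - 1))
  · -- cycle case
    have AdjC : ∀ i j, i < n → j < n →
        (G.Adj (e i) (e j) ↔ ((i + 1) % n = j ∨ (j + 1) % n = i)) := by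
      intro i j hi hj
      constructor
      · intro hadj
        rcases E4 i j hi hj hadj with h | h | ⟨h0, hj'⟩ | ⟨hj0, h0⟩
        · left; rw [← h] at hj ⊢; exact Nat.mod_eq_of_lt hj
        · right; rw [← h] at hi ⊢; exact Nat.mod_eq_of_lt hi
        · right; rw [hj', show n - 1 + 1 = n by omega, Nat.mod_self]; omega
        · left; rw [h0, show n - 1 + 1 = n by omega, Nat.mod_self] at *; omega
      · intro h
        rcases h with h | h
        · rcases show i + 1 < n ∨ i + 1 = n by omega with h1 | h1
          · rw [Nat.mod_eq_of_lt h1] at h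
            rw [← h]; exact E3 i h1
          · rw [h1, Nat.mod_self] at h
            rw [← h, show i = n - 1 by omega]
            exact hcyc.symm
        · rcases show j + 1 < n ∨ j + 1 = n by omega with h1 | h1
          · rw [Nat.mod_eq_of_lt h1] at h
            rw [← h]; exact (E3 j h1).symm
          · rw [h1, Nat.mod_self] at h
            rw [← h, show j = n - 1 by omega]
            exact hcyc
    by_cases hexc : n = 3 ∨ n = 6 ∨ n = 7 ∨ n = 11
    · exfalso
      have hiso : Nonempty (G ≃g cycleGraph n) := by
        apply IsolAux2.iso_of_adj_iff G (cycleGraph n) (Equiv.ofBijective _ hbij)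
        intro i j
        show G.Adj (e i.val) (e j.val) ↔ (cycleGraph n).Adj i j
        rw [cycleGraph_adj', AdjC i.val j.val i.isLt j.isLt]
        have hsub : ∀ a b : Fin n, ((a - b : Fin n) : ℕ) = (n - b.val + a.val) % n := by
          intro a b; rw [Fin.sub_def]
        have hi := i.isLt
        have hj := j.isLt
        rw [hsub i j, hsub j i,
          IsolAux2.small_mod (i.val + 1) n npos (by omega),
          IsolAux2.small_mod (j.val + 1) n npos (by omega),
          IsolAux2.small_mod (n - j.val + i.val) n npos (by omega),
          IsolAux2.small_mod (n - i.val + j.val) n npos (by omega)]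
        split_ifs <;> omega
      rcases hexc with h | h | h | h
      · exact hC3 (h ▸ hiso)
      · exact hC6 (h ▸ hiso)
      · exact hC7 (h ▸ hiso)
      · exact hC11 (h ▸ hiso)
    · -- general cycle
      push_neg at hexc
      obtain ⟨hx3, hx6, hx7, hx11⟩ := hexc
      set Sc : Finset ℕ := ((Finset.range (5 * (n / 5))).filter (fun j => j % 5 = 2)) ∪
        (if n % 5 = 0 then ∅ else {n - 2}) with hScdef
      have memSc : ∀ j, j ∈ Sc ↔ ((j % 5 = 2 ∧ j < 5 * (n / 5)) ∨ (n % 5 ≠ 0 ∧ j = n - 2)) := by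
        intro j
        by_cases h5 : n % 5 = 0 <;>
          simp [hScdef, h5, Finset.mem_union, Finset.mem_filter, Finset.mem_range] <;> tauto
      have C2 : ∀ m, m < n → covP Sc m ∨ covP Sc ((m + 1) % n) ∨ covP Sc ((m + 2) % n) := by
        intro m hm
        have hmem : ∀ j, ((j % 5 = 2 ∧ j < 5 * (n / 5)) ∨ (n % 5 ≠ 0 ∧ j = n - 2)) → j ∈ Sc :=
          fun j h => (memSc j).2 h
        rcases show m + 2 < n ∨ m = n - 2 ∨ m = n - 1 by omega with h | h | h
        · rw [Nat.mod_eq_of_lt (by omega), Nat.mod_eq_of_lt (by omega)]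
          simp only [covP]
          rcases (by omega : m % 5 = 0 ∨ m % 5 = 1 ∨ m % 5 = 2 ∨ m % 5 = 3 ∨ m % 5 = 4)
            with h5|h5|h5|h5|h5
          · rcases (by omega : ((m + 2) % 5 = 2 ∧ m + 2 < 5 * (n / 5)) ∨
                (n % 5 ≠ 0 ∧ m + 2 = n - 2) ∨ (n % 5 ≠ 0 ∧ m + 1 = n - 2)) with h1|h1|h1
            · exact Or.inr (Or.inr (Or.inl (hmem _ (Or.inl h1))))
            · exact Or.inr (Or.inr (Or.inl (hmem _ (Or.inr h1))))
            · exact Or.inr (Or.inr (Or.inr (Or.inr ⟨by omega,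
                hmem _ (Or.inr ⟨h1.1, by omega⟩)⟩)))
          · rcases (by omega : ((m + 1) % 5 = 2 ∧ m + 1 < 5 * (n / 5)) ∨
                (n % 5 ≠ 0 ∧ m + 1 = n - 2)) with h1|h1
            · exact Or.inr (Or.inl (Or.inl (hmem _ (Or.inl h1))))
            · exact Or.inr (Or.inl (Or.inl (hmem _ (Or.inr h1))))
          · exact Or.inl (Or.inl (hmem _ (Or.inl ⟨by omega, by omega⟩)))
          · exact Or.inl (Or.inr (Or.inr ⟨by omega, hmem _ (Or.inl ⟨by omega, by omega⟩)⟩))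
          · rcases (by omega : ((m + 3) % 5 = 2 ∧ m + 3 < 5 * (n / 5)) ∨
                (n % 5 ≠ 0 ∧ m + 3 = n - 2) ∨ (n % 5 ≠ 0 ∧ m + 2 = n - 2) ∨
                (n % 5 ≠ 0 ∧ m + 1 = n - 2)) with h1|h1|h1|h1
            · exact Or.inr (Or.inr (Or.inr (Or.inl (hmem _ (Or.inl ⟨by omega, by omega⟩)))))
            · exact Or.inr (Or.inr (Or.inr (Or.inl (hmem _ (Or.inr ⟨h1.1, by omega⟩)))))
            · exact Or.inr (Or.inl (Or.inr (Or.inl (hmem _ (Or.inr ⟨h1.1, by omega⟩)))))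
            · exact Or.inr (Or.inr (Or.inr (Or.inr ⟨by omega,
                hmem _ (Or.inr ⟨h1.1, by omega⟩)⟩)))
        · rw [show (m + 1) % n = n - 1 from by
              rw [show m + 1 = n - 1 by omega]; exact Nat.mod_eq_of_lt (by omega),
            show (m + 2) % n = 0 from by rw [show m + 2 = n by omega]; exact Nat.mod_self n]
          simp only [covP]
          rcases (by omega : n % 5 = 0 ∨ n % 5 ≠ 0) with h5|h5
          · exact Or.inl (Or.inr (Or.inr ⟨by omega, hmem _ (Or.inl ⟨by omega, by omega⟩)⟩))
          · exact Or.inl (Or.inl (hmem _ (Or.inr ⟨h5, by omega⟩)))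
        · rw [show (m + 1) % n = 0 from by rw [show m + 1 = n by omega]; exact Nat.mod_self n,
            show (m + 2) % n = 1 from by
              rw [show m + 2 = n + 1 by omega, Nat.add_mod_left]
              exact Nat.mod_eq_of_lt (by omega)]
          simp only [covP]
          rcases (by omega : (2 % 5 = 2 ∧ 2 < 5 * (n / 5)) ∨ (n % 5 ≠ 0 ∧ 2 = n - 2) ∨
              (n % 5 ≠ 0 ∧ 1 = n - 2)) with h1|h1|h1
          · exact Or.inr (Or.inr (Or.inr (Or.inl (hmem _ (Or.inl (by omega))))))
          · exact Or.inr (Or.inr (Or.inr (Or.inl (hmem _ (Or.inr (by omega))))))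
          · exact Or.inr (Or.inr (Or.inl (hmem _ (Or.inr h1))))
      apply key Sc
      · intro s hs
        rw [memSc] at hs
        have : 5 * (n / 5) ≤ n := Nat.mul_div_le n 5
        omega
      · intro s hs
        left
        rw [memSc] at hs
        have h1 : 5 * (n / 5) ≤ n := Nat.mul_div_le n 5
        have h2 : n % 5 + 5 * (n / 5) = n := by omega
        constructor <;> omega
      · -- cardinality
        have hA := IsolAux2.cardfil 2 (by omega) (5 * (n / 5))
        have hle := Finset.card_union_le
          ((Finset.range (5 * (n / 5))).filter (fun j => j % 5 = 2))
          (if n % 5 = 0 then (∅ : Finset ℕ) else {n - 2})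
        rw [← hScdef] at hle
        by_cases h5 : n % 5 = 0
        · rw [if_pos h5] at hle
          simp only [Finset.card_empty] at hle
          omega
        · rw [if_neg h5] at hle
          simp only [Finset.card_singleton] at hle
          omega
      · -- uniqueness of uncovered neighbor
        intro i hi hCi
        by_cases hc : covP Sc ((i + 1) % n)
        · refine ⟨e ((i + (n - 1)) % n), ?_⟩
          intro j hj hCj hadj
          rcases (AdjC i j hi hj).1 hadj with h | h
          · exact absurd (h ▸ hc) hCj
          · have hj' : (i + (n - 1)) % n = j := by
              rcases show j + 1 = n ∨ j + 1 < n by omega with h1 | h1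
              · have hi0 : i = 0 := by rw [← h, h1, Nat.mod_self]
                rw [hi0, Nat.zero_add, Nat.mod_eq_of_lt (by omega)]
                omega
              · have hij : i = j + 1 := by rw [← h, Nat.mod_eq_of_lt h1]
                rw [hij, show j + 1 + (n - 1) = j + n by omega, Nat.add_mod_right]
                exact Nat.mod_eq_of_lt hj
            rw [hj']
        · refine ⟨e ((i + 1) % n), ?_⟩
          intro j hj hCj hadj
          rcases (AdjC i j hi hj).1 hadj with h | h
          · rw [h]
          · exfalso
            rcases C2 j hj with hcv | hcv | hcv
            · exact hCj hcv
            · rw [h] at hcv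
              exact hCi hcv
            · have heq : (j + 2) % n = (i + 1) % n := by
                rcases show j + 1 = n ∨ j + 1 < n by omega with h1 | h1
                · have hi0 : i = 0 := by rw [← h, h1, Nat.mod_self]
                  rw [show j + 2 = n + 1 by omega, hi0, Nat.add_mod_left]
                · have hij : i = j + 1 := by rw [← h, Nat.mod_eq_of_lt h1]
                  rw [hij]
              rw [heq] at hcv
              exact hc hcv
  · -- path case
    have AdjP : ∀ i j, i < n → j < n →
        (G.Adj (e i) (e j) ↔ (i + 1 = j ∨ j + 1 = i)) := by
      intro i j hi hj
      constructor
      · intro hadj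
        rcases E4 i j hi hj hadj with h | h | ⟨h0, hj'⟩ | ⟨hj0, h0⟩
        · exact Or.inl h
        · exact Or.inr h
        · exfalso; rw [h0, hj'] at hadj; exact hcyc hadj
        · exfalso; rw [h0, hj0] at hadj; exact hcyc hadj.symm
      · intro h
        rcases h with h | h
        · rw [← h]; exact E3 i (by omega)
        · rw [← h]; exact (E3 j (by omega)).symm
    by_cases hn3 : n = 3
    · exfalso
      apply hP3
      refine hn3 ▸ ?_
      apply IsolAux2.iso_of_adj_iff G (pathGraph n) (Equiv.ofBijective _ hbij)
      intro i j
      show G.Adj (e i.val) (e j.val) ↔ (pathGraph n).Adj i j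
      rw [pathGraph_adj, AdjP i.val j.val i.isLt j.isLt]
    · -- general path
      set Sp : Finset ℕ := ((Finset.range n).filter (fun j => j % 5 = 3)) ∪
        (if n % 5 = 3 then {n - 2} else ∅) with hSpdef
      have memSp : ∀ j, j ∈ Sp ↔ ((j % 5 = 3 ∧ j < n) ∨ (n % 5 = 3 ∧ j = n - 2)) := by
        intro j
        by_cases h5 : n % 5 = 3 <;>
          simp [hSpdef, h5, Finset.mem_union, Finset.mem_filter, Finset.mem_range] <;> tauto
      have P2 : ∀ m, m + 2 < n → covP Sp m ∨ covP Sp (m + 1) ∨ covP Sp (m + 2) := by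
        intro m hm
        have hmem : ∀ j, ((j % 5 = 3 ∧ j < n) ∨ (n % 5 = 3 ∧ j = n - 2)) → j ∈ Sp :=
          fun j h => (memSp j).2 h
        simp only [covP]
        rcases (by omega : m % 5 = 0 ∨ m % 5 = 1 ∨ m % 5 = 2 ∨ m % 5 = 3 ∨ m % 5 = 4)
          with h|h|h|h|h
        · rcases (by omega : m + 3 < n ∨ m + 3 = n) with h2|h2
          · exact Or.inr (Or.inr (Or.inr (Or.inl (hmem _ (Or.inl ⟨by omega, by omega⟩)))))
          · exact Or.inr (Or.inl (Or.inl (hmem _ (Or.inr ⟨by omega, by omega⟩))))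
        · exact Or.inr (Or.inr (Or.inl (hmem _ (Or.inl ⟨by omega, by omega⟩))))
        · exact Or.inr (Or.inl (Or.inl (hmem _ (Or.inl ⟨by omega, by omega⟩))))
        · exact Or.inl (Or.inl (hmem _ (Or.inl ⟨by omega, by omega⟩)))
        · exact Or.inl (Or.inr (Or.inr ⟨by omega, hmem _ (Or.inl ⟨by omega, by omega⟩)⟩))
      apply key Sp
      · intro s hs
        rw [memSp] at hs
        omega
      · intro s hs
        exact Or.inr hcyc
      · have hA := IsolAux2.cardfil 3 (by omega) n
        have hle := Finset.card_union_le
          ((Finset.range n).filter (fun j => j % 5 = 3))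
          (if n % 5 = 3 then ({n - 2} : Finset ℕ) else ∅)
        rw [← hSpdef] at hle
        by_cases h5 : n % 5 = 3
        · rw [if_pos h5] at hle
          simp only [Finset.card_singleton] at hle
          omega
        · rw [if_neg h5] at hle
          simp only [Finset.card_empty] at hle
          omega
      · intro i hi hCi
        by_cases hc : i + 1 < n ∧ ¬ covP Sp (i + 1)
        · refine ⟨e (i + 1), ?_⟩
          intro j hj hCj hadj
          rcases (AdjP i j hi hj).1 hadj with h | h
          · rw [h]
          · exfalso
            rcases P2 (i - 1) (by omega) with hcv | hcv | hcv
            · rw [show i - 1 = j by omega] at hcv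
              exact hCj hcv
            · rw [show i - 1 + 1 = i by omega] at hcv
              exact hCi hcv
            · rw [show i - 1 + 2 = i + 1 by omega] at hcv
              exact hc.2 hcv
        · refine ⟨e (i - 1), ?_⟩
          intro j hj hCj hadj
          rcases (AdjP i j hi hj).1 hadj with h | h
          · exfalso
            rw [not_and_or, not_not] at hc
            rcases hc with hc | hc
            · omega
            · rw [h] at hc
              exact hCj hc
          · rw [show j = i - 1 by omega]
end
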